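/- Fix $b \geq 1$ and let $H_\ell = G_\ell - E(G_B)$ be the graph of the previous construction with the edges of $G_B$ deleted (so the $b+1$ paths now end in pendant trees/leaves on the $G_B$ side). Then in the path-restricted game with $b$ fires and $b$ firefighters, the total burnt count over all initial configurations is $\Omega(\ell^{b+1})$: there are at least $(\ell/2)^b$ configurations placing one fire on each of $b$ chosen paths at distance at least $\ell/4$ from both ends, and in each such configuration at least $\ell/4$ vertices burn regardless of firefighter play. -/

import Mathlib

open SimpleGraph Finset
open scoped Classical

namespace FF

variable {V : Type*} [Fintype V] [DecidableEq V]

/-- One step of fire spread: the fire spreads to every undefended neighbour of a burnt vertex. -/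
noncomputable def spread (G : SimpleGraph V) (D B : Finset V) : Finset V :=
  B ∪ Finset.univ.filter (fun v => v ∉ D ∧ ∃ u ∈ B, G.Adj u v)

/-- Cumulative defended set of a classic strategy. -/
noncomputable def cumDef (σ : ℕ → Finset V) (t : ℕ) : Finset V :=
  (Finset.range (t + 1)).biUnion σ

/-- Burnt set at time `t` in the classic game. -/
noncomputable def burnt (G : SimpleGraph V) (F : Finset V) (σ : ℕ → Finset V) : ℕ → Finset V
  | 0 => F
  | t + 1 => spread G (cumDef σ t) (burnt G F σ t)

/-- A classic strategy is valid for `b` firefighters. -/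
def ValidClassic (G : SimpleGraph V) (F : Finset V) (b : ℕ) (σ : ℕ → Finset V) : Prop :=
  ∀ t, (σ t).card ≤ b ∧ ∀ v ∈ σ t, v ∉ burnt G F σ t

/-- Final burnt set (the process stabilizes after `|V|` steps). -/
noncomputable def finalBurnt (G : SimpleGraph V) (F : Finset V) (σ : ℕ → Finset V) : Finset V :=
  burnt G F σ (Fintype.card V)

/-- Maximum number of vertices saved in the classic game. -/
noncomputable def MVS (G : SimpleGraph V) (F : Finset V) (b : ℕ) : ℕ :=
  sSup {k | ∃ σ : ℕ → Finset V, ValidClassic G F b σ ∧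
    k = Fintype.card V - (finalBurnt G F σ).card}

/-- Defended set induced by firefighter positions up to time `t`. -/
noncomputable def posDef {b : ℕ} (p : ℕ → Fin b → V) (t : ℕ) : Finset V :=
  (Finset.range (t + 1)).biUnion (fun τ => Finset.univ.image (p τ))

/-- Burnt set at time `t` in the position-based games. -/
noncomputable def pburnt (G : SimpleGraph V) (F : Finset V) {b : ℕ}
    (p : ℕ → Fin b → V) : ℕ → Finset V
  | 0 => F
  | t + 1 => spread G (posDef p t) (pburnt G F p t)

/-- Validity for the distance-restricted game: firefighters never occupy a burnt
vertex and move graph distance at most `d` each turn. -/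
def ValidDR (G : SimpleGraph V) (F : Finset V) (d : ℕ) {b : ℕ} (p : ℕ → Fin b → V) : Prop :=
  (∀ t i, p t i ∉ pburnt G F p t) ∧ ∀ t i, G.dist (p t i) (p (t + 1) i) ≤ d

/-- Distance-restricted maximum vertices saved. -/
noncomputable def DRMVS (G : SimpleGraph V) (F : Finset V) (b d : ℕ) : ℕ :=
  sSup {k | ∃ p : ℕ → Fin b → V, ValidDR G F d p ∧
    k = Fintype.card V - (pburnt G F p (Fintype.card V)).card}

/-- Validity for the path-restricted game with unlimited distance: firefighters
move along walks of unburnt vertices. -/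
def ValidPR (G : SimpleGraph V) (F : Finset V) {b : ℕ} (p : ℕ → Fin b → V) : Prop :=
  (∀ t i, p t i ∉ pburnt G F p t) ∧
    ∀ t i, ∃ w : G.Walk (p t i) (p (t + 1) i),
      ∀ v ∈ w.support, v ∉ pburnt G F p (t + 1)

/-- Path-restricted (unlimited distance) maximum vertices saved. -/
noncomputable def PRMVS (G : SimpleGraph V) (F : Finset V) (b : ℕ) : ℕ :=
  sSup {k | ∃ p : ℕ → Fin b → V, ValidPR G F p ∧
    k = Fintype.card V - (pburnt G F p (Fintype.card V)).card}

/-- Validity for the distance- and path-restricted game. -/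
def ValidDPR (G : SimpleGraph V) (F : Finset V) (d : ℕ) {b : ℕ} (p : ℕ → Fin b → V) : Prop :=
  (∀ t i, p t i ∉ pburnt G F p t) ∧
    ∀ t i, ∃ w : G.Walk (p t i) (p (t + 1) i), w.length ≤ d ∧
      ∀ v ∈ w.support, v ∉ pburnt G F p (t + 1)

/-- Distance- and path-restricted maximum vertices saved. -/
noncomputable def DPRMVS (G : SimpleGraph V) (F : Finset V) (b d : ℕ) : ℕ :=
  sSup {k | ∃ p : ℕ → Fin b → V, ValidDPR G F d p ∧
    k = Fintype.card V - (pburnt G F p (Fintype.card V)).card}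

/-- Burnt count in the single-defence game: the firefighter defends a single
vertex `w ≠ s` and the fire then burns everything reachable from `s` avoiding `w`. -/
noncomputable def sdBurnt (G : SimpleGraph V) (s : V) : ℕ :=
  sInf {k | ∃ w, w ≠ s ∧
    k = (Finset.univ.filter (fun x => ∃ q : G.Walk s x, w ∉ q.support)).card}

end FF

open FF

/-- One-directional edge description of the construction `G_ℓ`: the disjoint
union of `G_A`, `G_B` and, for each vertex `w` of `G_B`, a path with `ℓ`
internal vertices joining `f w ∈ G_A` to `w ∈ G_B`. -/
def glink {A B : Type*} (GA : SimpleGraph A) (GB : SimpleGraph B) (f : B → A) (ℓ : ℕ) :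
    (A ⊕ B ⊕ (B × Fin ℓ)) → (A ⊕ B ⊕ (B × Fin ℓ)) → Prop
  | Sum.inl a, Sum.inl a2 => GA.Adj a a2
  | Sum.inr (Sum.inl b1), Sum.inr (Sum.inl b2) => GB.Adj b1 b2
  | Sum.inl a, Sum.inr (Sum.inr x) => a = f x.1 ∧ (x.2 : ℕ) = 0
  | Sum.inr (Sum.inr x), Sum.inr (Sum.inr y) => x.1 = y.1 ∧ (y.2 : ℕ) = (x.2 : ℕ) + 1
  | Sum.inr (Sum.inl b1), Sum.inr (Sum.inr x) => b1 = x.1 ∧ (x.2 : ℕ) = ℓ - 1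
  | _, _ => False

/-- The graph `G_ℓ` of the construction. -/
def Gconn {A B : Type*} (GA : SimpleGraph A) (GB : SimpleGraph B) (f : B → A) (ℓ : ℕ) :
    SimpleGraph (A ⊕ B ⊕ (B × Fin ℓ)) where
  Adj x y := glink GA GB f ℓ x y ∨ glink GA GB f ℓ y x
  symm := ⟨fun x y h => h.symm⟩
  loopless := ⟨by
    rintro (a | b | x) h
    · exact GA.irrefl (by rcases h with h | h <;> exact h)
    · exact GB.irrefl (by rcases h with h | h <;> exact h)
    · rcases h with h | h <;> exact absurd h.2 (by omega)⟩

/-!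
Put one fire on each of `b` of the `b + 1` connecting paths, at a position in `[ℓ/4, ℓ/2)`;
there are at least `(ℓ/4)^b` such configurations. Without the edges of `G_B`, the part of a path
beyond its fire (towards the leaf) is entered only through the fire itself, so in the
path-restricted game no firefighter ever crosses a fire. If the leaf side of some fire holds no
firefighter at time `0`, that fire burns everything up to the leaf; otherwise, by pigeonhole, the
`b` firefighters all sit on leaf sides and any fire burns unhindered back towards `G_A`. Either
way more than `ℓ/4` vertices burn.
-/


section

variable {V : Type*} {G : SimpleGraph V}

theorem SimpleGraph.Walk.mem_support_of_forall_adj_into {S : Set V} {s : V}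
    (hS : ∀ u v, G.Adj u v → u ∉ S → v ∈ S → u = s) {u v : V} (w : G.Walk u v)
    (hu : u ∉ S) (hv : v ∈ S) : s ∈ w.support := by
  obtain ⟨d, hd, hdS, hdS'⟩ := w.exists_boundary_dart Sᶜ hu (not_not.mpr hv)
  exact hS _ _ d.adj hdS (not_not.mp hdS') ▸ w.dart_fst_mem_support_of_mem_darts hd

end

namespace FF

variable {V : Type*} [DecidableEq V] {b : ℕ} {p : ℕ → Fin b → V}

theorem mem_posDef_iff {t : ℕ} {v : V} : v ∈ posDef p t ↔ ∃ τ ≤ t, ∃ i, p τ i = v := by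
  simp [posDef]

variable [Fintype V] {G : SimpleGraph V} {F : Finset V}

theorem pburnt_mono (G : SimpleGraph V) (F : Finset V) (p : ℕ → Fin b → V) :
    Monotone (pburnt G F p) :=
  monotone_nat_of_le_succ fun _ => Finset.subset_union_left

theorem mem_pburnt_succ_of_adj {t : ℕ} {u v : V} (hu : u ∈ pburnt G F p t) (huv : G.Adj u v)
    (hv : v ∉ posDef p t) : v ∈ pburnt G F p (t + 1) :=
  Finset.mem_union_right _ (Finset.mem_filter.mpr ⟨Finset.mem_univ v, hv, u, hu, huv⟩)

theorem succ_le_card_pburnt_of_chain (c : ℕ → V) {m : ℕ} (hc0 : c 0 ∈ F)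
    (hadj : ∀ k < m, G.Adj (c k) (c (k + 1))) (hfree : ∀ k < m, ∀ t i, p t i ≠ c (k + 1))
    (hinj : Set.InjOn c (Set.Iic m)) :
    m + 1 ≤ (pburnt G F p (Fintype.card V)).card := by
  have hburn : ∀ k ≤ m, c k ∈ pburnt G F p k := by
    intro k
    induction k with
    | zero => exact fun _ => hc0
    | succ k ih =>
      refine fun hk => mem_pburnt_succ_of_adj (ih (by omega)) (hadj k hk) fun hmem => ?_
      obtain ⟨τ, -, i, hi⟩ := mem_posDef_iff.mp hmem
      exact hfree k hk τ i hi
  have hcard : ((Finset.range (m + 1)).image c).card = m + 1 := by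
    rw [Finset.card_image_of_injOn, Finset.card_range]
    exact hinj.mono fun k hk => Nat.lt_succ_iff.mp (Finset.mem_range.mp hk)
  have hm : m + 1 ≤ Fintype.card V := hcard ▸ Finset.card_le_univ _
  calc m + 1 = ((Finset.range (m + 1)).image c).card := hcard.symm
    _ ≤ _ := Finset.card_le_card fun v hv => by
      obtain ⟨k, hk, rfl⟩ := Finset.mem_image.mp hv
      have hk : k ≤ m := Nat.lt_succ_iff.mp (Finset.mem_range.mp hk)
      exact pburnt_mono G F p (by omega) (hburn k hk)

/-- In the path-restricted game a firefighter can never cross a burning cut vertex. -/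
theorem ValidPR.mem_iff_of_forall_adj_into (hp : ValidPR G F p) {S : Set V} {s : V} (hs : s ∈ F)
    (hS : ∀ u v, G.Adj u v → u ∉ S → v ∈ S → u = s) (t : ℕ) (i : Fin b) :
    p t i ∈ S ↔ p 0 i ∈ S := by
  induction t with
  | zero => rfl
  | succ t ih =>
    rw [← ih]
    obtain ⟨w, hw⟩ := hp.2 t i
    have hsw : s ∉ w.support := fun h => hw s h (pburnt_mono G F p (Nat.zero_le _) hs)
    constructor
    · exact fun h => by_contra fun h' => hsw (w.mem_support_of_forall_adj_into hS h' h)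
    · exact fun h => by_contra fun h' => hsw (by
        simpa using w.reverse.mem_support_of_forall_adj_into hS h' h)

theorem le_card_sub_PRMVS {m : ℕ} (hm : m ≤ Fintype.card V)
    (h : ∀ p : ℕ → Fin b → V, ValidPR G F p → m ≤ (pburnt G F p (Fintype.card V)).card) :
    m ≤ Fintype.card V - PRMVS G F b := by
  have : PRMVS G F b ≤ Fintype.card V - m := csSup_le' <| by
    rintro k ⟨p, hp, rfl⟩
    have := h p hp
    omega
  omega

end FF

section Construction

variable {A B : Type*} {ℓ : ℕ}

/-- Position `k ≤ ℓ` on the path of `j`, counted from the `G_A` side; position `ℓ` is `j` itself. -/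
def pathVertex (j : B) (k : ℕ) : A ⊕ B ⊕ (B × Fin ℓ) :=
  if h : k < ℓ then Sum.inr (Sum.inr (j, ⟨k, h⟩)) else Sum.inr (Sum.inl j)

theorem pathVertex_inj {j j' : B} {k k' : ℕ} (hk : k ≤ ℓ) (hk' : k' ≤ ℓ)
    (h : (pathVertex j k : A ⊕ B ⊕ (B × Fin ℓ)) = pathVertex j' k') : j = j' ∧ k = k' := by
  unfold pathVertex at h
  split_ifs at h <;> simp_all; omega

theorem Gconn_adj_pathVertex_succ (GA : SimpleGraph A) (GB : SimpleGraph B) (f : B → A) (j : B)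
    {k : ℕ} (hk : k < ℓ) : (Gconn GA GB f ℓ).Adj (pathVertex j k) (pathVertex j (k + 1)) := by
  unfold pathVertex
  split_ifs with h
  · exact Or.inl ⟨rfl, rfl⟩
  · exact Or.inr ⟨rfl, by simp; omega⟩

theorem eq_pathVertex_of_adj (GA : SimpleGraph A) (f : B → A) {j : B} {k : ℕ} (hk : 0 < k)
    (hkℓ : k ≤ ℓ) {u : A ⊕ B ⊕ (B × Fin ℓ)} (hu : (Gconn GA ⊥ f ℓ).Adj u (pathVertex j k)) :
    u = pathVertex j (k - 1) ∨ k < ℓ ∧ u = pathVertex j (k + 1) := by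
  unfold pathVertex at hu ⊢
  rcases u with a | j' | ⟨j', k'⟩ <;> split_ifs at hu ⊢ <;>
    simp_all [Gconn, glink, Fin.ext_iff]
  all_goals first | omega | (rcases hu with ⟨rfl, _⟩ | ⟨rfl, _⟩ <;> simp <;> omega)

theorem succ_le_card_vertices [Fintype A] [Fintype B] [Nonempty B] (ℓ : ℕ) :
    ℓ + 1 ≤ Fintype.card (A ⊕ B ⊕ (B × Fin ℓ)) := by
  simp only [Fintype.card_sum, Fintype.card_prod, Fintype.card_fin]
  nlinarith [Fintype.card_pos (α := B)]

def leafSide (j : B) (x : ℕ) : Set (A ⊕ B ⊕ (B × Fin ℓ)) :=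
  {v | ∃ k, x < k ∧ k ≤ ℓ ∧ pathVertex j k = v}

theorem eq_pathVertex_of_adj_leafSide (GA : SimpleGraph A) (f : B → A) {j : B} {x : ℕ}
    {u v : A ⊕ B ⊕ (B × Fin ℓ)} (huv : (Gconn GA ⊥ f ℓ).Adj u v) (hu : u ∉ leafSide j x)
    (hv : v ∈ leafSide j x) : u = pathVertex j x := by
  obtain ⟨k, hxk, hkℓ, rfl⟩ := hv
  rcases eq_pathVertex_of_adj GA f (by omega) hkℓ huv with rfl | ⟨hk, rfl⟩
  · by_cases hx : x < k - 1
    · exact absurd ⟨k - 1, hx, by omega, rfl⟩ hu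
    · rw [show k - 1 = x by omega]
  · exact absurd ⟨k + 1, by omega, hk, rfl⟩ hu

theorem eq_of_mem_leafSide {j j' : B} {x x' : ℕ} {v : A ⊕ B ⊕ (B × Fin ℓ)}
    (hv : v ∈ leafSide j x) (hv' : v ∈ leafSide j' x') : j = j' := by
  obtain ⟨k, -, hk, rfl⟩ := hv
  obtain ⟨k', -, hk', h⟩ := hv'
  exact (pathVertex_inj hk' hk h).1.symm

variable {ι : Type*} [Fintype ι] [DecidableEq (A ⊕ B ⊕ (B × Fin ℓ))]

theorem card_image_pathVertex {e : ι → B} (he : Function.Injective e) {x : ι → ℕ}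
    (hx : ∀ i, x i ≤ ℓ) :
    (univ.image fun i => (pathVertex (e i) (x i) : A ⊕ B ⊕ (B × Fin ℓ))).card =
      Fintype.card ι :=
  Finset.card_image_of_injective _ fun i i' h => he (pathVertex_inj (hx i) (hx i') h).1

theorem injOn_image_pathVertex {e : ι → B} (he : Function.Injective e) :
    Set.InjOn (fun x : ι → ℕ => univ.image fun i =>
      (pathVertex (e i) (x i) : A ⊕ B ⊕ (B × Fin ℓ))) {x | ∀ i, x i ≤ ℓ} := by
  intro x hx x' hx' h
  dsimp only at h
  funext i
  have hi : pathVertex (e i) (x i) ∈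
      univ.image fun i => (pathVertex (e i) (x' i) : A ⊕ B ⊕ (B × Fin ℓ)) :=
    h ▸ Finset.mem_image_of_mem _ (mem_univ i)
  obtain ⟨i', -, hi'⟩ := Finset.mem_image.mp hi
  obtain ⟨hii', hxi⟩ := pathVertex_inj (hx' i') (hx i) hi'
  obtain rfl := he hii'
  exact hxi.symm

variable [Fintype A] [Fintype B] {GA : SimpleGraph A}
  {GB : SimpleGraph B} {f : B → A} {F : Finset (A ⊕ B ⊕ (B × Fin ℓ))} {b : ℕ}
  {p : ℕ → Fin b → A ⊕ B ⊕ (B × Fin ℓ)}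

theorem sub_lt_card_pburnt_of_leafSide_free {j : B} {x : ℕ} (hx : x ≤ ℓ)
    (hfire : pathVertex j x ∈ F) (hfree : ∀ t i, p t i ∉ leafSide j x) :
    ℓ - x < (FF.pburnt (Gconn GA GB f ℓ) F p (Fintype.card (A ⊕ B ⊕ (B × Fin ℓ)))).card :=
  FF.succ_le_card_pburnt_of_chain (fun k => pathVertex j (x + k)) hfire
    (fun k hk => Gconn_adj_pathVertex_succ GA GB f j (by omega))
    (fun k hk t i h => hfree t i ⟨x + (k + 1), by omega, by omega, h.symm⟩)
    (fun k hk k' hk' h => by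
      have := (pathVertex_inj (by have := Set.mem_Iic.mp hk; omega)
        (by have := Set.mem_Iic.mp hk'; omega) h).2
      omega)

theorem lt_card_pburnt_of_rootSide_free {j : B} {x : ℕ} (hx : x ≤ ℓ)
    (hfire : pathVertex j x ∈ F) (hfree : ∀ k < x, ∀ t i, p t i ≠ pathVertex j k) :
    x < (FF.pburnt (Gconn GA GB f ℓ) F p (Fintype.card (A ⊕ B ⊕ (B × Fin ℓ)))).card :=
  FF.succ_le_card_pburnt_of_chain (fun k => pathVertex j (x - k)) (by simpa using hfire)
    (fun k hk => by
      simpa [show x - (k + 1) + 1 = x - k by omega] using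
        (Gconn_adj_pathVertex_succ GA GB f j (k := x - (k + 1)) (by omega)).symm)
    (fun k hk t i => hfree _ (by omega) t i)
    (fun k hk k' hk' h => by
      have := (pathVertex_inj (by omega) (by omega) h).2
      have := Set.mem_Iic.mp hk
      have := Set.mem_Iic.mp hk'
      omega)

theorem exists_min_lt_card_pburnt [Nonempty ι] (hb : b ≤ Fintype.card ι)
    {e : ι → B} (he : Function.Injective e) {x : ι → ℕ} (hx : ∀ i, x i ≤ ℓ)
    (hF : ∀ i, pathVertex (e i) (x i) ∈ F) (hp : FF.ValidPR (Gconn GA ⊥ f ℓ) F p) :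
    ∃ i, min (x i) (ℓ - x i) <
      (FF.pburnt (Gconn GA ⊥ f ℓ) F p (Fintype.card (A ⊕ B ⊕ (B × Fin ℓ)))).card := by
  have hstay : ∀ i t k, p t k ∈ leafSide (e i) (x i) ↔ p 0 k ∈ leafSide (e i) (x i) := fun i =>
    hp.mem_iff_of_forall_adj_into (hF i) fun _ _ huv hu hv =>
      eq_pathVertex_of_adj_leafSide GA f huv hu hv
  by_cases hunguarded : ∃ i, ∀ k, p 0 k ∉ leafSide (e i) (x i)
  · obtain ⟨i, hi⟩ := hunguarded
    exact ⟨i, (min_le_right _ _).trans_lt <| sub_lt_card_pburnt_of_leafSide_free (hx i) (hF i)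
      fun t k => (hstay i t k).not.mpr (hi k)⟩
  push Not at hunguarded
  choose φ hφ using hunguarded
  have hφinj : Function.Injective φ := fun i i' h =>
    he (eq_of_mem_leafSide (hφ i) (h ▸ hφ i'))
  have hφsurj : Function.Surjective φ := ((Fintype.bijective_iff_injective_and_card φ).mpr
    ⟨hφinj, le_antisymm (Fintype.card_le_of_injective φ hφinj) (by simpa using hb)⟩).2
  obtain ⟨i₀⟩ := ‹Nonempty ι›
  refine ⟨i₀, (min_le_left _ _).trans_lt <| lt_card_pburnt_of_rootSide_free (hx i₀) (hF i₀) ?_⟩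
  intro k hk t n hn
  obtain ⟨i, rfl⟩ := hφsurj n
  obtain ⟨k', hk', hk'ℓ, h⟩ := (hstay i t (φ i)).mpr (hφ i)
  obtain ⟨hi, rfl⟩ := pathVertex_inj hk'ℓ (hk.trans_le (hx i₀)).le (h.trans hn)
  obtain rfl := he hi
  omega

theorem lt_card_sub_PRMVS [Nonempty ι] (hb : b ≤ Fintype.card ι) {e : ι → B}
    (he : Function.Injective e) {x : ι → ℕ} {m : ℕ}
    (hx : ∀ i, m ≤ x i ∧ x i + m ≤ ℓ) (hF : ∀ i, pathVertex (e i) (x i) ∈ F) :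
    m < Fintype.card (A ⊕ B ⊕ (B × Fin ℓ)) - FF.PRMVS (Gconn GA ⊥ f ℓ) F b := by
  obtain ⟨i₀⟩ := ‹Nonempty ι›
  refine FF.le_card_sub_PRMVS ?_ fun p hp => ?_
  · have := hx i₀
    have : Nonempty B := ⟨e i₀⟩
    have := succ_le_card_vertices (A := A) (B := B) ℓ
    omega
  · obtain ⟨i, hi⟩ :=
      exists_min_lt_card_pburnt hb he (fun i => Nat.le_of_add_right_le (hx i).2) hF hp
    have := hx i
    omega

theorem pow_le_sum_card_sub_PRMVS (GA : SimpleGraph A) (f : B → A) (hb : 1 ≤ b)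
    (hcB : Fintype.card B = b + 1) :
    (ℓ / 4) ^ (b + 1) ≤ ∑ F ∈ (univ : Finset (A ⊕ B ⊕ (B × Fin ℓ))).powersetCard b,
      (Fintype.card (A ⊕ B ⊕ (B × Fin ℓ)) - FF.PRMVS (Gconn GA ⊥ f ℓ) F b) := by
  obtain ⟨b₀⟩ : Nonempty B := Fintype.card_pos_iff.mp (by omega)
  have hι : Fintype.card {j // j ≠ b₀} = b := by
    rw [Fintype.card_subtype_compl, Fintype.card_subtype_eq, hcB, Nat.add_sub_cancel]
  have : Nonempty {j // j ≠ b₀} := Fintype.card_pos_iff.mp (by omega)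
  let T := Fintype.piFinset fun _ : {j // j ≠ b₀} => Finset.Ico (ℓ / 4) (ℓ / 2)
  let Φ (x : {j // j ≠ b₀} → ℕ) : Finset (A ⊕ B ⊕ (B × Fin ℓ)) :=
    univ.image fun j => pathVertex j.1 (x j)
  have hT : ∀ x ∈ T, ∀ j, ℓ / 4 ≤ x j ∧ x j + ℓ / 4 ≤ ℓ := fun x hx j => by
    have := Finset.mem_Ico.mp (Fintype.mem_piFinset.mp hx j)
    omega
  have hTℓ : ∀ x ∈ T, ∀ j, x j ≤ ℓ := fun x hx j => by have := hT x hx j; omega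
  have hcard : (ℓ / 4) ^ b ≤ T.card := by
    simp only [T, Fintype.card_piFinset, Nat.card_Ico, prod_const, card_univ, hι]
    exact Nat.pow_le_pow_left (by omega) b
  calc (ℓ / 4) ^ (b + 1) ≤ T.card • (ℓ / 4) := by rw [pow_succ, smul_eq_mul]; gcongr
    _ ≤ ∑ x ∈ T, (Fintype.card (A ⊕ B ⊕ (B × Fin ℓ)) - FF.PRMVS (Gconn GA ⊥ f ℓ) (Φ x) b) :=
      Finset.card_nsmul_le_sum _ _ _ fun x hx => (lt_card_sub_PRMVS hι.ge
        Subtype.val_injective (hT x hx) fun j => Finset.mem_image_of_mem _ (mem_univ j)).le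
    _ = ∑ F ∈ T.image Φ, (Fintype.card (A ⊕ B ⊕ (B × Fin ℓ)) - FF.PRMVS (Gconn GA ⊥ f ℓ) F b) :=
      by rw [Finset.sum_image fun x hx x' hx' =>
        injOn_image_pathVertex Subtype.val_injective (hTℓ x hx) (hTℓ x' hx')]
    _ ≤ _ := Finset.sum_le_sum_of_subset fun F hF => by
      obtain ⟨x, hx, rfl⟩ := Finset.mem_image.mp hF
      rw [Finset.mem_powersetCard_univ, card_image_pathVertex Subtype.val_injective (hTℓ x hx), hι]

end Construction

theorem stmt12_general {A B : Type*} [Fintype A] [DecidableEq A] [Fintype B] [DecidableEq B]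
    (b : ℕ) (hb : 1 ≤ b)
    (GA : SimpleGraph A)
    (hcB : Fintype.card B = b + 1)
    (f : B → A) :
    ∃ c N : ℕ, 0 < c ∧ ∀ ℓ : ℕ, N ≤ ℓ →
      ℓ ^ (b + 1) ≤ c *
        ∑ F ∈ (Finset.univ : Finset (A ⊕ B ⊕ (B × Fin ℓ))).powersetCard b,
          (Fintype.card (A ⊕ B ⊕ (B × Fin ℓ)) -
            FF.PRMVS (Gconn GA (⊥ : SimpleGraph B) f ℓ) F b) := by
  refine ⟨5 ^ (b + 1), 16, by positivity, fun ℓ hℓ => ?_⟩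
  calc ℓ ^ (b + 1) ≤ (5 * (ℓ / 4)) ^ (b + 1) := Nat.pow_le_pow_left (by omega) _
    _ = 5 ^ (b + 1) * (ℓ / 4) ^ (b + 1) := mul_pow _ _ _
    _ ≤ _ := Nat.mul_le_mul_left _ (pow_le_sum_card_sub_PRMVS GA f hb hcB)

theorem stmt12 {A B : Type*} [Fintype A] [DecidableEq A] [Fintype B] [DecidableEq B]
    (b : ℕ) (hb : 1 ≤ b)
    (GA : SimpleGraph A) (hGA : GA.Connected)
    (hcB : Fintype.card B = b + 1) (hcA : b + 1 ≤ Fintype.card A)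
    (f : B → A) (hf : Function.Injective f) :
    ∃ c N : ℕ, 0 < c ∧ ∀ ℓ : ℕ, N ≤ ℓ →
      ℓ ^ (b + 1) ≤ c *
        ∑ F ∈ (Finset.univ : Finset (A ⊕ B ⊕ (B × Fin ℓ))).powersetCard b,
          (Fintype.card (A ⊕ B ⊕ (B × Fin ℓ)) -
            FF.PRMVS (Gconn GA (⊥ : SimpleGraph B) f ℓ) F b) :=
  stmt12_general b hb GA hcB f
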